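/- Let A ∈ ℝ^{m×n}, b ∈ ℝ^m, e = A x_e − b for some x_e ∈ ℝ^n, and x* = (I − A†A)x_0 + A†(b + e), where x_0 ∈ ℝ^n. Then A x* − b = e. Moreover, for any subset τ ⊆ [m] of row indices and any x_j ∈ ℝ^n, the updated point x_{j+1} = x_j + A_τ†(b_τ − A_τ x_j) satisfies ‖x_{j+1} − x*‖² = ‖(I − A_τ† A_τ)(x_j − x*)‖² + ‖A_τ† e_τ‖². -/

import Mathlib

/-!
Since `b + e = A x_e` lies in the range of `A` and `A A† A = A`, the point `x*` solves
`A x = b + e`. Hence the block residual is `b_τ - A_τ x_j = -e_τ - A_τ (x_j - x*)`, and a step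
maps `x_j - x*` to `(I - A_τ† A_τ)(x_j - x*) - A_τ† e_τ`. The Penrose conditions make
`A_τ† A_τ` a symmetric idempotent whose range contains `A_τ† e_τ`, so the two terms are
orthogonal and Pythagoras gives the identity.
-/

open Matrix

noncomputable section

open Classical in

/-- The Moore–Penrose pseudoinverse of a real matrix, defined via the four Penrose
conditions (which always admit a unique solution). -/
def mpinv {m n : Type*} [Fintype m] [Fintype n] (A : Matrix m n ℝ) : Matrix n m ℝ :=
  if h : ∃ B : Matrix n m ℝ,
      A * B * A = A ∧ B * A * B = B ∧ (A * B)ᵀ = A * B ∧ (B * A)ᵀ = B * A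
  then h.choose else 0

/-- Smallest nonzero eigenvalue of a square real matrix. -/
def lambdaMinPos {k : Type*} [Fintype k] [DecidableEq k] (M : Matrix k k ℝ) : ℝ :=
  sInf {μ : ℝ | μ ≠ 0 ∧ μ ∈ spectrum ℝ M}

/-- Largest eigenvalue of a square real matrix. -/
def lambdaMax {k : Type*} [Fintype k] [DecidableEq k] (M : Matrix k k ℝ) : ℝ :=
  sSup (spectrum ℝ M)

/-- Squared Euclidean norm of a vector. -/
def sqNorm {k : Type*} [Fintype k] (v : k → ℝ) : ℝ := ∑ i, (v i) ^ 2

/-- The row submatrix of `A` with rows indexed by the subset `τ`. -/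
def rowSub {ι κ : Type*} (A : Matrix ι κ ℝ) (τ : Finset ι) : Matrix τ κ ℝ :=
  Matrix.of fun i j => A i.1 j

/-- `T = (τ_1, …, τ_d)` is a `(d, a, β, r, R)` row covering of `A`:
the blocks cover all row indices, `a` lower-bounds the smallest nonzero eigenvalue and `β`
upper-bounds the largest eigenvalue of each `A_τ A_τᵀ`, and `r` (resp. `R`) is the minimum
(resp. maximum) number of blocks containing any single row. -/
structure IsRowCovering {ι κ : Type*} [Fintype ι] [DecidableEq ι] [Fintype κ] {d : ℕ}
    (A : Matrix ι κ ℝ) (τ : Fin d → Finset ι) (a β : ℝ) (r R : ℕ) : Prop where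
  cover : ∀ i : ι, ∃ l, i ∈ τ l
  alpha_le : ∀ l, a ≤ lambdaMinPos (rowSub A (τ l) * (rowSub A (τ l))ᵀ)
  le_beta : ∀ l, lambdaMax (rowSub A (τ l) * (rowSub A (τ l))ᵀ) ≤ β
  r_le : ∀ i : ι, r ≤ (Finset.univ.filter fun l => i ∈ τ l).card
  r_attained : ∃ i : ι, (Finset.univ.filter fun l => i ∈ τ l).card = r
  le_R : ∀ i : ι, (Finset.univ.filter fun l => i ∈ τ l).card ≤ R
  R_attained : ∃ i : ι, (Finset.univ.filter fun l => i ∈ τ l).card = R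

/-- One step of the block Kaczmarz method with block `τ`:
`x ↦ x + A_τ† (b_τ − A_τ x)`. -/
def kaczStep {ι κ : Type*} [Fintype ι] [Fintype κ] (A : Matrix ι κ ℝ) (b : ι → ℝ)
    (τ : Finset ι) (x : κ → ℝ) : κ → ℝ :=
  x + (mpinv (rowSub A τ)).mulVec (fun i : τ => b i.1 - (rowSub A τ).mulVec x i)

/-- The iterates of the block (randomized) Kaczmarz method, as a function of the sequence
`σ` of block choices: `x_k = x_{k-1} + A_τ† (b_τ − A_τ x_{k-1})` with `τ = τs (σ k)`. -/
def kaczIter {ι κ : Type*} [Fintype ι] [Fintype κ] {d : ℕ} (A : Matrix ι κ ℝ) (b : ι → ℝ)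
    (τs : Fin d → Finset ι) (x0 : κ → ℝ) : ∀ k : ℕ, (Fin k → Fin d) → κ → ℝ
  | 0, _ => x0
  | (k + 1), σ => kaczStep A b (τs (σ (Fin.last k))) (kaczIter A b τs x0 k (σ ∘ Fin.castSucc))

/-- Take `cfc (·⁻¹) M`: the scalar identities `x x⁻¹ x = x` and `x⁻¹ x x⁻¹ = x⁻¹` hold also
at `x = 0`. -/
lemma Matrix.IsHermitian.exists_commute_pseudoinverse {n : Type*} [Fintype n] [DecidableEq n]
    {M : Matrix n n ℝ} (hM : M.IsHermitian) :
    ∃ N : Matrix n n ℝ, M * N * M = M ∧ N * M * N = N ∧ Nᵀ = N ∧ Commute M N := by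
  have hM' : IsSelfAdjoint M := hM
  have hcont (f : ℝ → ℝ) : ContinuousOn f (spectrum ℝ M) := M.finite_spectrum.continuousOn f
  refine ⟨cfc (fun x : ℝ => x⁻¹) M, ?_, ?_, ?_, ?_⟩
  · conv_rhs => rw [← cfc_id' ℝ M, ← cfc_congr fun x _ => mul_inv_mul_cancel x]
    rw [cfc_mul _ _ M (hcont _) (hcont _), cfc_mul _ _ M (hcont _) (hcont _), cfc_id' ℝ M]
  · conv_rhs => rw [← cfc_congr fun x _ => by simpa using mul_inv_mul_cancel x⁻¹]
    rw [cfc_mul _ _ M (hcont _) (hcont _), cfc_mul _ _ M (hcont _) (hcont _), cfc_id' ℝ M]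
  · rw [← conjTranspose_eq_transpose_of_trivial]
    exact cfc_predicate (fun x : ℝ => x⁻¹) M
  · simpa only [cfc_id' ℝ M] using cfc_commute_cfc (fun x => x) (fun x : ℝ => x⁻¹) M

section Pseudoinverse

variable {m n : Type*} [Fintype m] [Fintype n]

/-- `B = N Aᵀ` with `N` the commuting pseudoinverse of `AᵀA`. -/
lemma exists_penrose_inverse (A : Matrix m n ℝ) :
    ∃ B : Matrix n m ℝ,
      A * B * A = A ∧ B * A * B = B ∧ (A * B)ᵀ = A * B ∧ (B * A)ᵀ = B * A := by
  classical
  obtain ⟨N, hNMN, hMNM, hNt, hcomm⟩ :=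
    (isHermitian_conjTranspose_mul_self A).exists_commute_pseudoinverse
  rw [conjTranspose_eq_transpose_of_trivial] at hNMN hMNM hcomm
  have hA : A * (N * (Aᵀ * A)) = A := by
    have h : Aᴴ * A * (N * (Aᵀ * A) - 1) = 0 := by
      rw [conjTranspose_eq_transpose_of_trivial, mul_sub, mul_one, ← mul_assoc, hNMN, sub_self]
    rwa [conjTranspose_mul_self_mul_eq_zero, Matrix.mul_sub, Matrix.mul_one, sub_eq_zero] at h
  refine ⟨N * Aᵀ, ?_, ?_, ?_, ?_⟩
  · simpa only [Matrix.mul_assoc] using hA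
  · calc N * Aᵀ * A * (N * Aᵀ) = N * (Aᵀ * A) * N * Aᵀ := by simp only [Matrix.mul_assoc]
      _ = N * Aᵀ := by rw [hMNM]
  · simp only [transpose_mul, transpose_transpose, hNt, Matrix.mul_assoc]
  · simp only [transpose_mul, transpose_transpose, hNt, Matrix.mul_assoc]
    simpa only [Matrix.mul_assoc] using hcomm.eq

lemma mpinv_penrose (A : Matrix m n ℝ) :
    A * mpinv A * A = A ∧ mpinv A * A * mpinv A = mpinv A ∧
      (A * mpinv A)ᵀ = A * mpinv A ∧ (mpinv A * A)ᵀ = mpinv A * A := by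
  rw [mpinv, dif_pos (exists_penrose_inverse A)]
  exact (exists_penrose_inverse A).choose_spec

lemma mul_mpinv_mul_self (A : Matrix m n ℝ) : A * mpinv A * A = A :=
  (mpinv_penrose A).1

lemma mpinv_mul_self_mul_mpinv (A : Matrix m n ℝ) : mpinv A * A * mpinv A = mpinv A :=
  (mpinv_penrose A).2.1

lemma transpose_mpinv_mul_self (A : Matrix m n ℝ) : (mpinv A * A)ᵀ = mpinv A * A :=
  (mpinv_penrose A).2.2.2

lemma mulVec_mpinv_mulVec_mulVec (A : Matrix m n ℝ) (x : n → ℝ) :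
    A *ᵥ (mpinv A *ᵥ (A *ᵥ x)) = A *ᵥ x := by
  rw [mulVec_mulVec, mulVec_mulVec, mul_mpinv_mul_self]

lemma one_sub_mpinv_mul_mulVec_dotProduct_mpinv_mulVec [DecidableEq n] (A : Matrix m n ℝ)
    (w : n → ℝ) (v : m → ℝ) : ((1 - mpinv A * A) *ᵥ w) ⬝ᵥ (mpinv A *ᵥ v) = 0 := by
  have hidem : mpinv A * A * (mpinv A * A) = mpinv A * A := by
    rw [← Matrix.mul_assoc, mpinv_mul_self_mul_mpinv]
  have hrange : mpinv A *ᵥ v = (mpinv A * A) *ᵥ (mpinv A *ᵥ v) := by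
    rw [mulVec_mulVec, mpinv_mul_self_mul_mpinv]
  rw [hrange, dotProduct_mulVec, ← mulVec_transpose, transpose_mpinv_mul_self, mulVec_mulVec,
    Matrix.mul_sub, Matrix.mul_one, hidem, sub_self, zero_mulVec, zero_dotProduct]

end Pseudoinverse

lemma sqNorm_eq_dotProduct {k : Type*} [Fintype k] (v : k → ℝ) : sqNorm v = v ⬝ᵥ v := by
  simp only [sqNorm, dotProduct, sq]

lemma sqNorm_sub_of_dotProduct_eq_zero {k : Type*} [Fintype k] {u v : k → ℝ}
    (h : u ⬝ᵥ v = 0) : sqNorm (u - v) = sqNorm u + sqNorm v := by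
  simp only [sqNorm_eq_dotProduct, sub_dotProduct, dotProduct_sub, dotProduct_comm v u, h]
  ring

lemma rowSub_mulVec {ι κ : Type*} [Fintype κ] (A : Matrix ι κ ℝ) (τ : Finset ι) (x : κ → ℝ)
    (i : τ) : (rowSub A τ *ᵥ x) i = (A *ᵥ x) i :=
  rfl

lemma kaczStep_sub_eq {ι κ : Type*} [Fintype ι] [Fintype κ] [DecidableEq κ]
    {A : Matrix ι κ ℝ} {b e : ι → ℝ} {xstar : κ → ℝ} (h : A *ᵥ xstar - b = e)
    (τ : Finset ι) (x : κ → ℝ) :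
    kaczStep A b τ x - xstar =
      (1 - mpinv (rowSub A τ) * rowSub A τ) *ᵥ (x - xstar) -
        mpinv (rowSub A τ) *ᵥ fun i : τ => e i := by
  have hres : (fun i : τ => b i - (rowSub A τ *ᵥ x) i) =
      -(fun i : τ => e i) - rowSub A τ *ᵥ (x - xstar) := by
    funext i
    have hi := congrFun h i
    simp only [Pi.sub_apply] at hi
    simp only [rowSub_mulVec, mulVec_sub, Pi.sub_apply, Pi.neg_apply]
    linarith
  rw [kaczStep, hres, mulVec_sub, mulVec_neg, sub_mulVec, one_mulVec, mulVec_mulVec]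
  abel

/-- **Lemma (residual identity and orthogonal error decomposition).** With
`e = A x_e − b` and `x* = (I − A†A)x_0 + A†(b + e)`, we have `A x* − b = e`; moreover,
for any row subset `τ` and any point `x_j`, the updated point
`x_{j+1} = x_j + A_τ†(b_τ − A_τ x_j)` satisfies
`‖x_{j+1} − x*‖² = ‖(I − A_τ† A_τ)(x_j − x*)‖² + ‖A_τ† e_τ‖²`. -/
theorem kaczmarz_error_decomposition {m n : ℕ}
    (A : Matrix (Fin m) (Fin n) ℝ) (b : Fin m → ℝ)
    (xe : Fin n → ℝ) (e : Fin m → ℝ) (he : e = A.mulVec xe - b)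
    (x0 xstar : Fin n → ℝ)
    (hxstar : xstar = (x0 - (mpinv A).mulVec (A.mulVec x0)) + (mpinv A).mulVec (b + e)) :
    A.mulVec xstar - b = e ∧
      ∀ (τ : Finset (Fin m)) (xj : Fin n → ℝ),
        sqNorm (kaczStep A b τ xj - xstar) =
          sqNorm (((1 : Matrix (Fin n) (Fin n) ℝ) -
              mpinv (rowSub A τ) * rowSub A τ).mulVec (xj - xstar)) +
            sqNorm ((mpinv (rowSub A τ)).mulVec fun i : τ => e i.1) := by
  have hresidual : A *ᵥ xstar - b = e := by
    have hbe : b + e = A *ᵥ xe := by rw [he, add_sub_cancel]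
    rw [hxstar, hbe, mulVec_add, mulVec_sub, mulVec_mpinv_mulVec_mulVec,
      mulVec_mpinv_mulVec_mulVec, sub_self, zero_add, ← hbe, add_sub_cancel_left]
  refine ⟨hresidual, fun τ xj => ?_⟩
  rw [kaczStep_sub_eq hresidual]
  exact sqNorm_sub_of_dotProduct_eq_zero
    (one_sub_mpinv_mul_mulVec_dotProduct_mpinv_mulVec (rowSub A τ) _ _)

end
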